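/- arXiv:2505.12374 — 4 statements merged into one kernel-verified Lean document; each statement's English description precedes it below -/
import Mathlib

section
/- For every positive integer m, 2^{-m} * Σ_{w=0}^{m-1} ((m - w)/m) * 2^{-w} * C(m+w-1, m-1) = 2^{-2m} * C(2m, m). -/
lemma aux_sum (m : ℕ) (hm : 0 < m) : ∀ j, j < m →
    ∑ w ∈ Finset.range (j+1), (m - w) * 2^(j-w) * (m+w-1).choose (m-1)
      = m * (m+j).choose j := by
  intro j
  induction j with
  | zero => intro _; simp
  | succ j ih =>
    intro hj
    have hj' : j < m := by omega
    rw [Finset.sum_range_succ]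
    have h2 : ∑ w ∈ Finset.range (j+1), (m - w) * 2^(j+1-w) * (m+w-1).choose (m-1)
        = 2 * ∑ w ∈ Finset.range (j+1), (m - w) * 2^(j-w) * (m+w-1).choose (m-1) := by
      rw [Finset.mul_sum]
      refine Finset.sum_congr rfl fun w hw => ?_
      have hw' : w < j + 1 := Finset.mem_range.mp hw
      have : j+1-w = (j-w)+1 := by omega
      rw [this, pow_succ]; ring
    rw [h2, ih hj']
    have e1 : m + (j+1) - 1 = m + j := by omega
    have e2 : j + 1 - (j+1) = 0 := by omega
    rw [e1, e2, pow_zero, mul_one]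
    have hsymm : (m+j).choose (m-1) = (m+j).choose (j+1) := by
      rw [← Nat.choose_symm (by omega : m - 1 ≤ m + j)]
      congr 1; omega
    rw [hsymm, show m + (j+1) = (m+j)+1 from by omega, Nat.choose_succ_succ]
    have hB : ((m+j).choose (j+1) : ℤ) * (j+1) = (m+j).choose j * m := by
      have h := Nat.choose_succ_right_eq (m+j) j
      have h2 : m + j - j = m := by omega
      rw [h2] at h
      exact_mod_cast h
    zify [Nat.le_of_lt hj]
    linear_combination -hB

theorem stmt_1 (m : ℕ) (hm : 0 < m) :
    (2 : ℚ) ^ (-(m : ℤ)) *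
      ∑ w ∈ Finset.range m,
        (((m : ℚ) - (w : ℚ)) / (m : ℚ)) * (2 : ℚ) ^ (-(w : ℤ))
          * ((m + w - 1).choose (m - 1) : ℚ)
    = (2 : ℚ) ^ (-(2 * m : ℤ)) * ((2 * m).choose m : ℚ) := by
  have key : ∑ w ∈ Finset.range m, (m - w) * 2^(m-1-w) * (m+w-1).choose (m-1)
      = m * (2*m-1).choose (m-1) := by
    have h := aux_sum m hm (m-1) (by omega)
    rw [show m - 1 + 1 = m from by omega, show m + (m-1) = 2*m-1 from by omega] at h
    exact h
  have hm0 : (m : ℚ) ≠ 0 := Nat.cast_ne_zero.mpr hm.ne'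
  -- rewrite each term of the sum
  have hterm : ∀ w ∈ Finset.range m,
      (((m : ℚ) - (w : ℚ)) / (m : ℚ)) * (2 : ℚ) ^ (-(w : ℤ))
          * ((m + w - 1).choose (m - 1) : ℚ)
      = (((m - w) * 2^(m-1-w) * (m+w-1).choose (m-1) : ℕ) : ℚ)
          * ((2:ℚ) ^ (-((m-1 : ℕ) : ℤ)) / m) := by
    intro w hw
    have hw' : w < m := Finset.mem_range.mp hw
    have hcast : ((m - w : ℕ) : ℚ) = (m : ℚ) - w := by
      push_cast [Nat.cast_sub hw'.le]; ring
    have hpow : ((2:ℚ) ^ (m-1-w : ℕ)) * (2:ℚ) ^ (-((m-1 : ℕ) : ℤ)) = (2:ℚ) ^ (-(w : ℤ)) := by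
      rw [← zpow_natCast (2:ℚ) (m-1-w), ← zpow_add₀ (by norm_num : (2:ℚ) ≠ 0)]
      congr 1
      have : ((m-1-w : ℕ) : ℤ) = (m : ℤ) - 1 - w := by omega
      have h2 : ((m-1 : ℕ) : ℤ) = (m : ℤ) - 1 := by omega
      rw [this, h2]; ring
    have hrw : (((m - w) * 2^(m-1-w) * (m+w-1).choose (m-1) : ℕ) : ℚ)
          * ((2:ℚ) ^ (-((m-1 : ℕ) : ℤ)) / m)
        = ((m:ℚ) - w) * (((2:ℚ) ^ (m-1-w : ℕ)) * (2:ℚ) ^ (-((m-1 : ℕ) : ℤ)))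
            * ((m+w-1).choose (m-1) : ℚ) / m := by
      push_cast [Nat.cast_sub hw'.le]; ring
    rw [hrw, hpow]
    ring
  rw [Finset.sum_congr rfl hterm, ← Finset.sum_mul, ← Nat.cast_sum, key]
  -- now pure computation
  have hch : ((2*m).choose m : ℚ) = 2 * ((2*m-1).choose (m-1) : ℚ) := by
    have h := Nat.add_one_mul_choose_eq (2*m-1) (m-1)
    rw [show 2*m-1+1 = 2*m from by omega, show m-1+1 = m from by omega] at h
    have h' : ((2*m : ℕ):ℚ) * ((2*m-1).choose (m-1) : ℚ) = ((2*m).choose m : ℚ) * m := by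
      exact_mod_cast h
    push_cast at h'
    refine mul_right_cancel₀ hm0 ?_
    linarith
  rw [hch]
  have hzm : ((m-1 : ℕ) : ℤ) = (m : ℤ) - 1 := by omega
  rw [hzm]
  push_cast
  rw [show -(2 * (m:ℤ)) = -(m:ℤ) + (-(m:ℤ) + 1) + -1 from by ring,
      show -(m:ℤ) + (-(m:ℤ)+1) = -(m:ℤ) + (-((m:ℤ)-1)) from by ring]
  rw [zpow_add₀ (by norm_num : (2:ℚ) ≠ 0), zpow_add₀ (by norm_num : (2:ℚ) ≠ 0)]
  field_simp
end

section
/- If X is an almost surely bounded real random variable with E[X^m] = 2^{-2m} * C(2m, m) for every natural number m ≥ 1, then X has the arcsine distribution on (0,1), i.e., the law of X has density x ↦ 1/(π √(x(1-x))) on (0,1). -/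
open MeasureTheory Real Set

lemma gamma_half (m : ℕ) :
    Real.Gamma ((m : ℝ) + 1/2) = Real.sqrt Real.pi * (2*m).factorial / (4^m * m.factorial) := by
  induction m with
  | zero =>
    rw [show ((0:ℕ):ℝ) + 1/2 = 1/2 by norm_num, Real.Gamma_one_half_eq]; simp
  | succ n ih =>
    have h : ((n+1 : ℕ) : ℝ) + 1/2 = ((n : ℝ) + 1/2) + 1 := by push_cast; ring
    rw [h, Real.Gamma_add_one (by positivity), ih]
    have h1 : (2*(n+1)) = (2*n+1) + 1 := by ring
    rw [h1, Nat.factorial_succ, Nat.factorial_succ, Nat.factorial_succ]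
    push_cast
    field_simp
    ring

open MeasureTheory Real Set intervalIntegral
open scoped NNReal ENNReal

noncomputable def rf (n : ℕ) (x : ℝ) : ℝ := x ^ ((n:ℝ) - 1/2) * (1-x) ^ (-(1/2):ℝ)

lemma cf_eq (n : ℕ) {x : ℝ} (hx : x ∈ Set.Icc (0:ℝ) 1) :
    (x:ℂ) ^ ((n:ℂ) + 1/2 - 1) * (1-(x:ℂ)) ^ ((1/2 : ℂ) - 1) = ((rf n x : ℝ) : ℂ) := by
  have h1 : ((n:ℂ) + 1/2 - 1) = (((n:ℝ) - 1/2 : ℝ) : ℂ) := by push_cast; ring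
  have h2 : ((1/2 : ℂ) - 1) = ((-(1/2) : ℝ) : ℂ) := by push_cast; ring
  have h3 : (1 - (x:ℂ)) = ((1 - x : ℝ) : ℂ) := by push_cast; ring
  rw [h1, h3, h2, ← Complex.ofReal_cpow hx.1, ← Complex.ofReal_cpow (by linarith [hx.2]), rf,
    Complex.ofReal_mul]

lemma rf_intable (n : ℕ) : IntervalIntegrable (rf n) volume 0 1 := by
  have hc := Complex.betaIntegral_convergent (u := (n:ℂ) + 1/2) (v := 1/2)
    (by simp [Complex.add_re]; positivity) (by norm_num)
  rw [intervalIntegrable_iff_integrableOn_Ioc_of_le (by norm_num)] at hc ⊢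
  refine IntegrableOn.congr_fun hc.re (fun x hx => ?_) measurableSet_Ioc
  rw [cf_eq n (Ioc_subset_Icc_self hx)]
  simp

lemma rf_integral (n : ℕ) :
    ∫ x in (0:ℝ)..1, rf n x = Real.pi * ((2*n).choose n : ℝ) / 4^n := by
  have hG := Complex.Gamma_mul_Gamma_eq_betaIntegral (s := (n:ℂ) + 1/2) (t := 1/2)
    (by simp [Complex.add_re]; positivity) (by norm_num)
  have hbeta : Complex.betaIntegral ((n:ℂ) + 1/2) (1/2)
      = ((∫ x in (0:ℝ)..1, rf n x : ℝ) : ℂ) := by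
    rw [Complex.betaIntegral]
    rw [intervalIntegral.integral_congr (g := fun x => ((rf n x : ℝ) : ℂ))
      (fun x hx => cf_eq n (by rwa [Set.uIcc_of_le (by norm_num : (0:ℝ) ≤ 1)] at hx))]
    exact intervalIntegral.integral_ofReal
  rw [hbeta] at hG
  have h1 : ((n:ℂ) + 1/2) = (((n:ℝ) + 1/2 : ℝ) : ℂ) := by push_cast; ring
  have h2 : ((((n:ℝ) + 1/2 : ℝ)) : ℂ) + 1/2 = (((n:ℝ) + 1 : ℝ) : ℂ) := by push_cast; ring
  have h3 : ((1:ℂ)/2) = (((1:ℝ)/2 : ℝ) : ℂ) := by push_cast; ring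
  rw [h1, h2, h3, Complex.Gamma_ofReal, Complex.Gamma_ofReal, Complex.Gamma_ofReal,
    ← Complex.ofReal_mul, ← Complex.ofReal_mul] at hG
  have hR : Real.Gamma ((n:ℝ) + 1/2) * Real.Gamma (1/2)
      = Real.Gamma ((n:ℝ) + 1) * ∫ x in (0:ℝ)..1, rf n x := by exact_mod_cast hG
  rw [gamma_half, Real.Gamma_one_half_eq,
    show ((n:ℝ) + 1) = ((n:ℕ) : ℝ) + 1 by norm_num, Real.Gamma_nat_eq_factorial] at hR
  have hfac : ((2*n).factorial : ℝ) = ((2*n).choose n : ℝ) * n.factorial * n.factorial := by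
    have h := Nat.choose_mul_factorial_mul_factorial (show n ≤ 2*n by omega)
    rw [show 2*n-n = n from by omega] at h
    exact_mod_cast h.symm
  have hπ : Real.sqrt Real.pi * Real.sqrt Real.pi = Real.pi :=
    Real.mul_self_sqrt Real.pi_pos.le
  have hne : (n.factorial : ℝ) ≠ 0 := by positivity
  field_simp at hR ⊢
  apply mul_right_cancel₀ (show ((n.factorial:ℝ) * n.factorial) ≠ 0 by positivity)
  rw [hfac] at hR
  linear_combination (-1 : ℝ) * hR
    + (((2*n).choose n : ℝ) * n.factorial * n.factorial) * hπ
noncomputable def dens (x : ℝ) : ℝ :=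
  Set.indicator (Set.Ioo (0 : ℝ) 1) (fun x => 1 / (Real.pi * Real.sqrt (x * (1 - x)))) x

lemma meas_dens : Measurable dens := by
  apply Measurable.indicator _ measurableSet_Ioo
  exact measurable_const.div ((measurable_const.mul
    (Real.continuous_sqrt.measurable.comp ((measurable_id.mul (measurable_const.sub measurable_id))))))

lemma dens_nonneg (x : ℝ) : 0 ≤ dens x := by
  unfold dens
  apply Set.indicator_nonneg
  intro y hy
  positivity

lemma rf_eq (n : ℕ) {x : ℝ} (hx : x ∈ Set.Ioo (0:ℝ) 1) :
    rf n x = x ^ n / Real.sqrt (x * (1 - x)) := by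
  obtain ⟨h0, h1⟩ := hx
  have h1' : (0:ℝ) < 1 - x := by linarith
  rw [rf, Real.rpow_sub h0, Real.rpow_natCast, Real.rpow_neg h1'.le,
    Real.sqrt_mul h0.le, Real.sqrt_eq_rpow, Real.sqrt_eq_rpow]
  rw [div_mul_eq_div_div]
  ring

lemma xn_dens_eq_indicator (n : ℕ) : (fun x => x ^ n * dens x)
    = Set.indicator (Set.Ioo (0:ℝ) 1) (fun x => x ^ n * (1 / (Real.pi * Real.sqrt (x * (1 - x))))) := by
  ext x
  by_cases hx : x ∈ Set.Ioo (0:ℝ) 1 <;> simp [dens, hx]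

lemma mom_intable (n : ℕ) : IntegrableOn
    (fun x => x ^ n * (1 / (Real.pi * Real.sqrt (x * (1 - x))))) (Set.Ioo (0:ℝ) 1) volume := by
  have h : IntegrableOn (rf n) (Set.Ioo (0:ℝ) 1) volume := by
    have := (intervalIntegrable_iff_integrableOn_Ioc_of_le (by norm_num : (0:ℝ) ≤ 1)).mp
      (rf_intable n)
    exact this.mono_set Set.Ioo_subset_Ioc_self
  refine IntegrableOn.congr_fun (h.const_mul (1/Real.pi)) (fun x hx => ?_) measurableSet_Ioo
  rw [rf_eq n hx]
  field_simp

lemma mom_val (n : ℕ) :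
    ∫ x in Set.Ioo (0:ℝ) 1, x ^ n * (1 / (Real.pi * Real.sqrt (x * (1 - x))))
      = ((2*n).choose n : ℝ) / 4^n := by
  have h1 : ∫ x in Set.Ioo (0:ℝ) 1, x ^ n * (1 / (Real.pi * Real.sqrt (x * (1 - x))))
      = ∫ x in Set.Ioo (0:ℝ) 1, (1/Real.pi) * rf n x := by
    refine setIntegral_congr_fun measurableSet_Ioo (fun x hx => ?_)
    rw [rf_eq n hx]
    field_simp
  rw [h1, MeasureTheory.integral_const_mul, ← integral_Ioc_eq_integral_Ioo,
    ← intervalIntegral.integral_of_le (by norm_num : (0:ℝ) ≤ 1), rf_integral]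
  field_simp

lemma integrable_xn_dens (n : ℕ) : Integrable (fun x => x ^ n * dens x) volume := by
  rw [xn_dens_eq_indicator, integrable_indicator_iff measurableSet_Ioo]
  exact mom_intable n

lemma integral_xn_dens (n : ℕ) :
    ∫ x, x ^ n * dens x = ((2*n).choose n : ℝ) / 4^n := by
  rw [xn_dens_eq_indicator, MeasureTheory.integral_indicator measurableSet_Ioo, mom_val]
section Unique

variable {P : Measure ℝ} {R : ℝ}

lemma ae_mem_of_null_compl (hP : P (Set.Icc (-R) R)ᶜ = 0) : ∀ᵐ x ∂P, x ∈ Set.Icc (-R) R := by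
  rw [ae_iff]
  exact hP

lemma integrable_pow_of_supp [IsFiniteMeasure P] (hP : P (Set.Icc (-R) R)ᶜ = 0) (n : ℕ) :
    Integrable (fun x : ℝ => x ^ n) P := by
  refine (integrable_const (R ^ n)).mono' (measurable_id.pow_const n).aestronglyMeasurable ?_
  filter_upwards [ae_mem_of_null_compl hP] with x hx
  rw [Real.norm_eq_abs, abs_pow]
  exact pow_le_pow_left₀ (abs_nonneg x) (abs_le.mpr ⟨hx.1, hx.2⟩) n

lemma integral_poly_eq {Q : Measure ℝ} [IsFiniteMeasure P] [IsFiniteMeasure Q]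
    (hP : P (Set.Icc (-R) R)ᶜ = 0) (hQ : Q (Set.Icc (-R) R)ᶜ = 0)
    (h : ∀ n : ℕ, ∫ x, x ^ n ∂P = ∫ x, x ^ n ∂Q) (p : Polynomial ℝ) :
    ∫ x, p.eval x ∂P = ∫ x, p.eval x ∂Q := by
  have key : ∀ (M : Measure ℝ) (_ : IsFiniteMeasure M) (_ : M (Set.Icc (-R) R)ᶜ = 0),
      ∫ x, p.eval x ∂M = ∑ i ∈ Finset.range (p.natDegree + 1), p.coeff i * ∫ x, x ^ i ∂M := by
    intro M hM hMc
    have h1 : ∀ x : ℝ, p.eval x = ∑ i ∈ Finset.range (p.natDegree + 1), p.coeff i * x ^ i :=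
      fun x => Polynomial.eval_eq_sum_range (p := p) x
    simp_rw [h1]
    rw [MeasureTheory.integral_finset_sum]
    · simp_rw [MeasureTheory.integral_const_mul]
    · exact fun i _ => (integrable_pow_of_supp hMc i).const_mul _
  rw [key P ‹_› hP, key Q ‹_› hQ]
  simp_rw [h]

lemma integrable_of_bdd_cont [IsFiniteMeasure P] {g : ℝ → ℝ} (hg : Continuous g)
    {M : ℝ} (hM : ∀ x, |g x| ≤ M) : Integrable g P :=
  (integrable_const M).mono' hg.measurable.aestronglyMeasurable
    (Filter.Eventually.of_forall (fun x => by rw [Real.norm_eq_abs]; exact hM x))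

lemma integral_bcf_eq {Q : Measure ℝ} [IsProbabilityMeasure P] [IsProbabilityMeasure Q]
    (hR : 0 < R) (hP : P (Set.Icc (-R) R)ᶜ = 0) (hQ : Q (Set.Icc (-R) R)ᶜ = 0)
    (h : ∀ n : ℕ, ∫ x, x ^ n ∂P = ∫ x, x ^ n ∂Q) {g : ℝ → ℝ} (hg : Continuous g)
    {M : ℝ} (hM : ∀ x, |g x| ≤ M) : ∫ x, g x ∂P = ∫ x, g x ∂Q := by
  have hgP : Integrable g P := integrable_of_bdd_cont hg hM
  have hgQ : Integrable g Q := integrable_of_bdd_cont hg hM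
  have main : ∀ ε > (0:ℝ), |∫ x, g x ∂P - ∫ x, g x ∂Q| ≤ 2 * ε := by
    intro ε hε
    obtain ⟨p, hp⟩ := exists_polynomial_near_of_continuousOn (-R) R g hg.continuousOn ε hε
    have est : ∀ (N : Measure ℝ) (_ : IsProbabilityMeasure N) (_ : N (Set.Icc (-R) R)ᶜ = 0),
        |∫ x, g x ∂N - ∫ x, p.eval x ∂N| ≤ ε := by
      intro N hN hNc
      have hpN : Integrable (fun x => p.eval x) N := by
        have h1 : ∀ x : ℝ, p.eval x = ∑ i ∈ Finset.range (p.natDegree + 1), p.coeff i * x ^ i :=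
          fun x => Polynomial.eval_eq_sum_range (p := p) x
        simp_rw [h1]
        exact MeasureTheory.integrable_finset_sum _ (fun i _ => (integrable_pow_of_supp hNc i).const_mul _)
      have hgN : Integrable g N := integrable_of_bdd_cont hg hM
      rw [← integral_sub hgN hpN, ← Real.norm_eq_abs]
      have hle := norm_integral_le_of_norm_le_const (μ := N) (f := fun x => g x - p.eval x)
        (C := ε) ?_
      · simpa using hle
      · filter_upwards [ae_mem_of_null_compl hNc] with x hx
        rw [Real.norm_eq_abs, abs_sub_comm]
        exact (hp x hx).le
    have hpoly := integral_poly_eq hP hQ h p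
    have e1 := est P ‹_› hP
    have e2 := est Q ‹_› hQ
    calc |∫ x, g x ∂P - ∫ x, g x ∂Q|
        ≤ |∫ x, g x ∂P - ∫ x, p.eval x ∂P| + |∫ x, p.eval x ∂Q - ∫ x, g x ∂Q| := by
          rw [hpoly]; exact abs_sub_le _ _ _ |>.trans (by rw [abs_sub_comm (∫ x, p.eval x ∂Q)])
      _ ≤ 2 * ε := by rw [abs_sub_comm (∫ x, Polynomial.eval x p ∂Q)]; linarith
  by_contra hne
  have hpos : 0 < |∫ x, g x ∂P - ∫ x, g x ∂Q| := by
    rw [abs_pos, sub_ne_zero]; exact hne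
  have := main (|∫ x, g x ∂P - ∫ x, g x ∂Q| / 4) (by linarith)
  linarith

lemma ext_of_moments {Q : Measure ℝ} [IsProbabilityMeasure P] [IsProbabilityMeasure Q]
    (hR : 0 < R) (hP : P (Set.Icc (-R) R)ᶜ = 0) (hQ : Q (Set.Icc (-R) R)ᶜ = 0)
    (h : ∀ n : ℕ, ∫ x, x ^ n ∂P = ∫ x, x ^ n ∂Q) : P = Q := by
  apply ext_of_forall_lintegral_eq_of_IsFiniteMeasure
  intro f
  have hint : ∀ (N : Measure ℝ) (_ : IsProbabilityMeasure N),
      Integrable (fun x => (f x : ℝ)) N := fun N hN =>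
    BoundedContinuousFunction.integrable_of_nnreal N f
  rw [lintegral_coe_eq_integral f (hint P ‹_›), lintegral_coe_eq_integral f (hint Q ‹_›)]
  congr 1
  have hb : ∀ x, |(f x : ℝ)| ≤ nndist f 0 := by
    intro x
    rw [abs_of_nonneg (f x).coe_nonneg]
    exact_mod_cast BoundedContinuousFunction.NNReal.upper_bound f x
  exact integral_bcf_eq hR hP hQ h (NNReal.continuous_coe.comp f.continuous) hb

end Unique
lemma nu_univ : (volume.withDensity fun x => ENNReal.ofReal (dens x)) Set.univ = 1 := by
  have hint : Integrable dens volume := by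
    have h : dens = fun x => x ^ 0 * dens x := by funext x; simp
    rw [h]; exact integrable_xn_dens 0
  rw [withDensity_apply _ MeasurableSet.univ, Measure.restrict_univ,
    ← ofReal_integral_eq_lintegral_ofReal hint (Filter.Eventually.of_forall dens_nonneg)]
  have h : dens = fun x => x ^ 0 * dens x := by funext x; simp
  rw [h, integral_xn_dens 0]
  simp

lemma nu_moment (n : ℕ) :
    ∫ x, x ^ n ∂(volume.withDensity fun x => ENNReal.ofReal (dens x))
      = ((2*n).choose n : ℝ) / 4^n := by
  rw [show (fun x => ENNReal.ofReal (dens x))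
      = (fun x => (((fun y => Real.toNNReal (dens y)) x : ℝ≥0) : ℝ≥0∞)) from rfl,
    integral_withDensity_eq_integral_smul meas_dens.real_toNNReal (fun x => x ^ n)]
  have h : ∀ x : ℝ, ((dens x).toNNReal : ℝ≥0) • x ^ n = x ^ n * dens x := fun x => by
    rw [NNReal.smul_def, smul_eq_mul,
      Real.coe_toNNReal _ (dens_nonneg x), mul_comm]
  simp_rw [h]
  exact integral_xn_dens n

lemma nu_supp {R : ℝ} (hR : 1 ≤ R) :
    (volume.withDensity fun x => ENNReal.ofReal (dens x)) (Set.Icc (-R) R)ᶜ = 0 := by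
  have h0 : ∀ᵐ x ∂(volume : Measure ℝ), x ∈ (Set.Icc (-R) R)ᶜ →
      ENNReal.ofReal (dens x) = (fun _ => (0:ℝ≥0∞)) x := by
    refine Filter.Eventually.of_forall (fun x hx => ?_)
    have hx' : x ∉ Set.Ioo (0:ℝ) 1 := by
      intro hmem
      exact hx ⟨by linarith [hmem.1, hR], by linarith [hmem.2, hR]⟩
    simp [dens, Set.indicator_of_notMem hx']
  rw [withDensity_apply _ measurableSet_Icc.compl,
    setLIntegral_congr_fun_ae measurableSet_Icc.compl h0, lintegral_zero]

/-- A bounded random variable whose `m`-th moment is `2^{-2m} (2m choose m)` for all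
`m ≥ 1` has the arcsine distribution on `(0,1)`. -/
theorem stmt_9 {Ω : Type*} [MeasurableSpace Ω] (μ : Measure Ω) [IsProbabilityMeasure μ]
    (X : Ω → ℝ) (hX : Measurable X)
    (hbdd : ∃ C : ℝ, ∀ᵐ ω ∂μ, |X ω| ≤ C)
    (hmom : ∀ m : ℕ, 1 ≤ m →
      ∫ ω, (X ω) ^ m ∂μ = (2 : ℝ) ^ (-(2 * m : ℤ)) * ((2 * m).choose m : ℝ)) :
    Measure.map X μ
      = volume.withDensity (fun x =>
          ENNReal.ofReal (Set.indicator (Set.Ioo (0 : ℝ) 1)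
            (fun x => 1 / (Real.pi * Real.sqrt (x * (1 - x)))) x)) := by
  obtain ⟨C, hC⟩ := hbdd
  set R : ℝ := max C 1 with hRdef
  have hR1 : 1 ≤ R := le_max_right C 1
  have hR0 : 0 < R := lt_of_lt_of_le one_pos hR1
  haveI hPprob : IsProbabilityMeasure (Measure.map X μ) :=
    Measure.isProbabilityMeasure_map hX.aemeasurable
  haveI hνprob : IsProbabilityMeasure (volume.withDensity fun x => ENNReal.ofReal (dens x)) :=
    ⟨nu_univ⟩
  have hPsupp : Measure.map X μ (Set.Icc (-R) R)ᶜ = 0 := by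
    rw [Measure.map_apply hX measurableSet_Icc.compl]
    refine measure_mono_null (fun ω hω => ?_) (ae_iff.mp hC)
    intro habs
    have : |X ω| ≤ R := le_trans habs (le_max_left C 1)
    exact hω ⟨(abs_le.mp this).1, (abs_le.mp this).2⟩
  have hPmom : ∀ n : ℕ, ∫ x, x ^ n ∂(Measure.map X μ) = ((2*n).choose n : ℝ) / 4^n := by
    intro n
    rw [integral_map hX.aemeasurable (show AEStronglyMeasurable (fun x : ℝ => x ^ n)
      (Measure.map X μ) from (measurable_id'.pow_const n).aestronglyMeasurable)]
    rcases Nat.eq_zero_or_pos n with hn | hn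
    · subst hn; simp
    · rw [hmom n hn]
      have h4 : ((2:ℝ) ^ (-(2 * n : ℤ))) = (4 ^ n)⁻¹ := by
        rw [zpow_neg]
        congr 1
        rw [show ((2 * n : ℤ)) = ((2 * n : ℕ) : ℤ) by push_cast; ring, zpow_natCast, pow_mul]
        norm_num
      rw [h4]
      ring
  have key : Measure.map X μ = volume.withDensity fun x => ENNReal.ofReal (dens x) :=
    ext_of_moments hR0 hPsupp (nu_supp hR1)
      (fun n => (hPmom n).trans (nu_moment n).symm)
  exact key
end

section
/- Weak ballot theorem: among all sequences of a ones and b minus-ones (with a ≥ b, a, b nonnegative integers) arranged uniformly at random, the probability that every partial sum is nonnegative equals (a + 1 - b)/(a + 1). -/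
open Classical

open Finset

set_option maxRecDepth 4000

namespace Ballot14

def wt (x : Bool) : ℤ := if x then 1 else -1

def cnt {n : ℕ} (f : Fin n → Bool) : ℕ := (univ.filter (fun j => f j = true)).card

def psum (n : ℕ) (f : Fin n → Bool) (k : ℕ) : ℤ :=
  ∑ j ∈ univ.filter (fun j : Fin n => (j : ℕ) < k), wt (f j)

def Good (n : ℕ) (f : Fin n → Bool) : Prop := ∀ k ∈ Finset.Icc 1 n, 0 ≤ psum n f k

instance (n : ℕ) : DecidablePred (Good n) := fun f => by unfold Good; infer_instance

def W (n a : ℕ) : Finset (Fin n → Bool) := univ.filter (fun f => cnt f = a ∧ Good n f)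

lemma psum_eq (n : ℕ) (f : Fin n → Bool) (k : ℕ) :
    psum n f k = ∑ j : Fin n, if (j : ℕ) < k then wt (f j) else 0 := by
  rw [psum, sum_filter]

lemma cnt_eq (n : ℕ) (f : Fin n → Bool) :
    cnt f = ∑ j : Fin n, if f j then 1 else 0 := by
  rw [cnt, Finset.card_filter]

lemma psum_snoc (n : ℕ) (g : Fin n → Bool) (x : Bool) (k : ℕ) :
    psum (n+1) (Fin.snoc g x) k = psum n g k + (if n < k then wt x else 0) := by
  rw [psum_eq, psum_eq, Fin.sum_univ_castSucc]
  simp only [Fin.snoc_castSucc, Fin.snoc_last, Fin.coe_castSucc, Fin.val_last]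

lemma cnt_snoc (n : ℕ) (g : Fin n → Bool) (x : Bool) :
    cnt (Fin.snoc g x) = cnt g + (if x then 1 else 0) := by
  rw [cnt_eq, cnt_eq, Fin.sum_univ_castSucc]
  simp only [Fin.snoc_castSucc, Fin.snoc_last]

lemma psum_total (n : ℕ) (f : Fin n → Bool) (k : ℕ) (h : n ≤ k) :
    psum n f k = 2 * (cnt f : ℤ) - n := by
  have h1 : psum n f k = ∑ j : Fin n, wt (f j) := by
    rw [psum_eq]
    refine Finset.sum_congr rfl fun j _ => ?_
    rw [if_pos (lt_of_lt_of_le j.isLt h)]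
  have h2 : ∀ j : Fin n, wt (f j) = 2 * (if f j then (1:ℤ) else 0) - 1 := by
    intro j; cases f j <;> simp [wt]
  rw [h1, cnt_eq]
  push_cast
  rw [Finset.sum_congr rfl (fun j _ => h2 j), Finset.sum_sub_distrib, ← Finset.mul_sum]
  simp [mul_comm]

end Ballot14

namespace Ballot14

lemma W_empty (n a : ℕ) (h : 2 * a < n) : W n a = ∅ := by
  ext f
  simp only [W, mem_filter, mem_univ, true_and, Finset.notMem_empty, iff_false]
  rintro ⟨hc, hg⟩
  have h1 := hg n (by simp; omega)
  rw [psum_total n f n le_rfl, hc] at h1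
  have : (2 * a : ℤ) < n := by exact_mod_cast h
  omega

lemma W_self (n : ℕ) : (W n n).card = 1 := by
  have : W n n = {fun _ => true} := by
    ext f
    simp only [W, mem_filter, mem_univ, true_and, Finset.mem_singleton]
    constructor
    · rintro ⟨hc, -⟩
      have h1 : univ.filter (fun j => f j = true) = (univ : Finset (Fin n)) := by
        apply Finset.eq_univ_of_card
        exact hc.trans (Fintype.card_fin n).symm
      funext j
      have := Finset.mem_filter.1 (h1 ▸ Finset.mem_univ j)
      simp [this.2]
    · rintro rfl
      refine ⟨by simp [cnt], fun k hk => ?_⟩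
      rw [psum]
      apply Finset.sum_nonneg
      intro j hj
      simp [wt]
  rw [this, Finset.card_singleton]

lemma W_rec (n a : ℕ) (ha : 1 ≤ a) (h2 : n + 1 ≤ 2 * a) :
    (W (n+1) a).card = (W n (a-1)).card + (W n a).card := by
  classical
  -- transfer to pairs via snoc
  have key : ∀ (g : Fin n → Bool) (x : Bool),
      ((Fin.snoc g x : Fin (n+1) → Bool) ∈ W (n+1) a) ↔
        (cnt g + (if x then 1 else 0) = a ∧ Good n g) := by
    intro g x
    simp only [W, mem_filter, mem_univ, true_and]
    have hcnt := cnt_snoc n g x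
    constructor
    · rintro ⟨hc, hg⟩
      refine ⟨by omega, fun k hk => ?_⟩
      simp only [Finset.mem_Icc] at hk
      have h1 := hg k (by simp only [Finset.mem_Icc]; omega)
      rw [psum_snoc, if_neg (by omega)] at h1
      simpa using h1
    · rintro ⟨hc, hg⟩
      refine ⟨by omega, fun k hk => ?_⟩
      simp only [Finset.mem_Icc] at hk
      rcases Nat.lt_or_ge k (n+1) with hk2 | hk2
      · rw [psum_snoc, if_neg (by omega)]
        have h1 := hg k (by simp only [Finset.mem_Icc]; omega)
        simpa using h1
      · rw [psum_total (n+1) _ k hk2, hcnt]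
        have : (cnt g : ℤ) + (if x then 1 else 0) = a := by
          exact_mod_cast congrArg (Nat.cast : ℕ → ℤ) hc
        push_cast
        omega
  -- transfer card to pairs
  have step1 : (W (n+1) a).card =
      (univ.filter (fun p : Bool × (Fin n → Bool) =>
        (cnt p.2 + (if p.1 then 1 else 0) = a ∧ Good n p.2))).card := by
    apply Finset.card_bij' (fun f _ => (f (Fin.last n), Fin.init f))
      (fun p _ => Fin.snoc p.2 p.1)
    · intro f hf
      simp only [Finset.mem_filter, Finset.mem_univ, true_and]
      rw [← key]
      rwa [Fin.snoc_init_self]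
    · intro p hp
      simp only [Finset.mem_filter, Finset.mem_univ, true_and] at hp
      rw [key]
      exact hp
    · intro f _; exact Fin.snoc_init_self f
    · intro p _
      ext
      · simp
      · simp [Fin.init_snoc]
  rw [step1]
  have hset : univ.filter (fun p : Bool × (Fin n → Bool) =>
        (cnt p.2 + (if p.1 then 1 else 0) = a ∧ Good n p.2))
      = ({true} ×ˢ W n (a-1)) ∪ ({false} ×ˢ W n a) := by
    ext ⟨x, g⟩
    simp only [Finset.mem_filter, Finset.mem_univ, true_and, Finset.mem_union,
      Finset.mem_product, Finset.mem_singleton, W]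
    cases x
    · simp only [if_neg (by simp : ¬(false = true)), Finset.mem_filter, Finset.mem_univ,
        true_and]
      constructor
      · rintro ⟨h1, hgd⟩; exact Or.inr ⟨by omega, hgd⟩
      · rintro (⟨h0, -⟩ | ⟨h1, hgd⟩)
        · exact absurd h0 (by simp)
        · exact ⟨by omega, hgd⟩
    · simp only [if_pos rfl, Finset.mem_filter, Finset.mem_univ, true_and]
      rw [if_pos trivial]
      constructor
      · rintro ⟨h1, hgd⟩; exact Or.inl ⟨by omega, hgd⟩
      · rintro (⟨h1, hgd⟩ | ⟨h0, -⟩)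
        · exact ⟨by omega, hgd⟩
        · exact absurd h0 (by simp)
  rw [hset, Finset.card_union_of_disjoint, Finset.card_product, Finset.card_product]
  · simp
  · rw [Finset.disjoint_left]
    rintro ⟨x, g⟩ h1 h2
    simp only [Finset.mem_product, Finset.mem_singleton] at h1 h2
    rw [h1.1] at h2
    exact absurd h2.1 (by simp)

end Ballot14

namespace Ballot14

def F (a b : ℕ) : ℕ := match b with
  | 0 => 1
  | Nat.succ c => Nat.choose (a + c + 1) (c + 1) - Nat.choose (a + c + 1) c

lemma choose_mono_mid (n k : ℕ) (h : k + 1 ≤ n - k) : n.choose k ≤ n.choose (k + 1) := by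
  have h1 := Nat.choose_succ_right_eq n k
  have h2 : n.choose k * (k + 1) ≤ n.choose k * (n - k) :=
    Nat.mul_le_mul_left _ h
  rw [← h1] at h2
  exact Nat.le_of_mul_le_mul_right h2 (Nat.succ_pos k)

lemma F_succ_self (c : ℕ) : F c (c + 1) = 0 := by
  show Nat.choose (c + c + 1) (c + 1) - Nat.choose (c + c + 1) c = 0
  have : Nat.choose (2 * c + 1) ((2 * c + 1) - (c + 1)) = Nat.choose (2 * c + 1) (c + 1) :=
    Nat.choose_symm (by omega)
  have h2 : (2 * c + 1) - (c + 1) = c := by omega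
  rw [h2] at this
  have h3 : c + c + 1 = 2 * c + 1 := by omega
  rw [h3, this]
  omega

lemma F_rec (a b : ℕ) (h : b ≤ a) : F (a + 1) (b + 1) = F a (b + 1) + F (a + 1) b := by
  cases b with
  | zero =>
      have h0 : F (a + 1) (0 + 1) =
          Nat.choose (a + 1 + 0 + 1) 1 - Nat.choose (a + 1 + 0 + 1) 0 := rfl
      have h1 : F a (0 + 1) = Nat.choose (a + 0 + 1) 1 - Nat.choose (a + 0 + 1) 0 := rfl
      have h2 : F (a + 1) 0 = 1 := rfl
      rw [h0, h1, h2]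
      simp [Nat.choose_one_right]
  | succ c =>
      have hc : c + 1 ≤ a := h
      have e1 : F (a + 1) (c + 1 + 1) =
          Nat.choose (a + c + 3) (c + 2) - Nat.choose (a + c + 3) (c + 1) := by
        have h0 : F (a + 1) (c + 1 + 1) =
            Nat.choose (a + 1 + (c + 1) + 1) (c + 1 + 1) -
            Nat.choose (a + 1 + (c + 1) + 1) (c + 1) := rfl
        rw [h0, show a + 1 + (c + 1) + 1 = a + c + 3 by omega]
      have e2 : F a (c + 1 + 1) =
          Nat.choose (a + c + 2) (c + 2) - Nat.choose (a + c + 2) (c + 1) := by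
        have h0 : F a (c + 1 + 1) =
            Nat.choose (a + (c + 1) + 1) (c + 1 + 1) -
            Nat.choose (a + (c + 1) + 1) (c + 1) := rfl
        rw [h0, show a + (c + 1) + 1 = a + c + 2 by omega]
      have e3 : F (a + 1) (c + 1) =
          Nat.choose (a + c + 2) (c + 1) - Nat.choose (a + c + 2) c := by
        have h0 : F (a + 1) (c + 1) =
            Nat.choose (a + 1 + c + 1) (c + 1) - Nat.choose (a + 1 + c + 1) c := rfl
        rw [h0, show a + 1 + c + 1 = a + c + 2 by omega]
      have p1 : Nat.choose (a + c + 3) (c + 2) =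
          Nat.choose (a + c + 2) (c + 1) + Nat.choose (a + c + 2) (c + 2) := by
        have h0 := Nat.choose_succ_succ (a + c + 2) (c + 1)
        simpa [Nat.succ_eq_add_one, show a + c + 2 + 1 = a + c + 3 by omega] using h0
      have p2 : Nat.choose (a + c + 3) (c + 1) =
          Nat.choose (a + c + 2) c + Nat.choose (a + c + 2) (c + 1) := by
        have h0 := Nat.choose_succ_succ (a + c + 2) c
        simpa [Nat.succ_eq_add_one, show a + c + 2 + 1 = a + c + 3 by omega] using h0
      have m1 : Nat.choose (a + c + 2) c ≤ Nat.choose (a + c + 2) (c + 1) :=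
        choose_mono_mid _ _ (by omega)
      have m2 : Nat.choose (a + c + 2) (c + 1) ≤ Nat.choose (a + c + 2) (c + 2) :=
        choose_mono_mid _ _ (by omega)
      omega

lemma W_card (n a b : ℕ) (hn : a + b = n) (hba : b ≤ a) : (W n a).card = F a b := by
  induction n using Nat.strong_induction_on generalizing a b with
  | _ n ih =>
    cases b with
    | zero =>
        subst hn
        exact W_self a
    | succ c =>
        have ha : 1 ≤ a := le_trans (Nat.succ_le_succ (Nat.zero_le c)) hba
        obtain ⟨a', rfl⟩ : ∃ a', a = a' + 1 := ⟨a - 1, by omega⟩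
        have hm : n = (a' + c + 1) + 1 := by omega
        subst hm
        rw [W_rec (a' + c + 1) (a' + 1) (by omega) (by omega)]
        have hsecond : (W (a' + c + 1) (a' + 1)).card = F (a' + 1) c :=
          ih (a' + c + 1) (by omega) (a' + 1) c (by omega) (by omega)
        have hfirst : (W (a' + c + 1) (a' + 1 - 1)).card = F a' (c + 1) := by
          have : a' + 1 - 1 = a' := by omega
          rw [this]
          rcases Nat.lt_or_ge a' (c + 1) with hlt | hge
          · have ha'c : a' = c := by omega
            subst ha'c
            rw [W_empty _ _ (by omega), Finset.card_empty, F_succ_self]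
          · exact ih (a' + c + 1) (by omega) a' (c + 1) (by omega) hge
        rw [hfirst, hsecond, F_rec a' c (by omega)]

lemma card_cnt (n a : ℕ) :
    (univ.filter (fun f : Fin n → Bool => cnt f = a)).card = n.choose a := by
  classical
  have : (univ.filter (fun f : Fin n → Bool => cnt f = a)).card
      = ((univ : Finset (Fin n)).powersetCard a).card := by
    apply Finset.card_nbij (fun f => univ.filter (fun j => f j = true))
    · intro f hf
      simp only [Finset.coe_filter, Finset.mem_coe, Finset.mem_filter, Finset.mem_univ, true_and, Set.mem_setOf_eq] at hf ⊢
      rw [Finset.mem_powersetCard]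
      exact ⟨Finset.subset_univ _, hf⟩
    · intro f hf g hg hfg
      simp only at hfg
      funext j
      have := Finset.ext_iff.1 hfg j
      simp only [Finset.mem_filter, Finset.mem_univ, true_and] at this
      cases hj : f j
      · cases hj2 : g j
        · rfl
        · exact absurd (this.2 hj2) (by simp [hj])
      · exact (this.1 hj).symm
    · intro s hs
      simp only [Finset.mem_coe, Finset.mem_powersetCard] at hs
      refine ⟨fun j => decide (j ∈ s), ?_, ?_⟩
      · simp only [Finset.coe_filter, Finset.mem_univ, true_and, Set.mem_setOf_eq, cnt]
        have : univ.filter (fun j => decide (j ∈ s) = true) = s := by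
          ext j; simp
        exact Finset.mem_coe.2 (Finset.mem_filter.2 ⟨Finset.mem_univ _, by show cnt _ = a; rw [cnt, this]; exact hs.2⟩)
      · ext j; simp
  rw [this, Finset.card_powersetCard, Finset.card_univ, Fintype.card_fin]

end Ballot14

/-- Weak ballot theorem. A sequence of `a` ones and `b` minus-ones is encoded as
`f : Fin (a+b) → Bool` (`true` = `+1`, `false` = `-1`); the probability is the number
of such sequences with all partial sums nonnegative divided by the total number of
sequences with `a` ones and `b` minus-ones. -/

theorem stmt_14 (a b : ℕ) (hab : b ≤ a) :
    ((Finset.univ.filter (fun f : Fin (a + b) → Bool =>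
        (Finset.univ.filter (fun j => f j = true)).card = a ∧
        ∀ k ∈ Finset.Icc 1 (a + b),
          0 ≤ ∑ j ∈ Finset.univ.filter (fun j : Fin (a + b) => (j : ℕ) < k),
                (if f j then (1 : ℤ) else -1))).card : ℚ)
      / ((Finset.univ.filter (fun f : Fin (a + b) → Bool =>
          (Finset.univ.filter (fun j => f j = true)).card = a)).card : ℚ)
      = ((a : ℚ) + 1 - b) / ((a : ℚ) + 1) := by
  have hnum : (Finset.univ.filter (fun f : Fin (a + b) → Bool =>
        (Finset.univ.filter (fun j => f j = true)).card = a ∧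
        ∀ k ∈ Finset.Icc 1 (a + b),
          0 ≤ ∑ j ∈ Finset.univ.filter (fun j : Fin (a + b) => (j : ℕ) < k),
                (if f j then (1 : ℤ) else -1))).card = Ballot14.F a b := by
    rw [← Ballot14.W_card (a + b) a b rfl hab, Ballot14.W]
    congr 1
    ext f
    simp only [Ballot14.cnt, Ballot14.Good, Ballot14.psum, Ballot14.wt, Finset.mem_filter]
    apply Iff.symm
    apply Finset.mem_filter
  have hden : (Finset.univ.filter (fun f : Fin (a + b) → Bool =>
          (Finset.univ.filter (fun j => f j = true)).card = a)).card = (a + b).choose a := by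
    rw [← Ballot14.card_cnt (a + b) a]
    congr 1
  rw [hnum, hden]
  clear hnum hden
  have hsymm : (a + b).choose a = (a + b).choose b := by
    have := Nat.choose_symm (Nat.le_add_left b a)
    rwa [show a + b - b = a by omega] at this
  rw [hsymm]
  cases b with
  | zero =>
      have h1 : Ballot14.F a 0 = 1 := rfl
      rw [h1, Nat.choose_zero_right]
      have : ((a : ℚ) + 1) ≠ 0 := by positivity
      field_simp
      simp
  | succ c =>
      have hF : Ballot14.F a (c + 1) =
          (a + c + 1).choose (c + 1) - (a + c + 1).choose c := rfl
      have hle : (a + c + 1).choose c ≤ (a + c + 1).choose (c + 1) :=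
        Ballot14.choose_mono_mid _ _ (by omega)
      have hid := Nat.choose_succ_right_eq (a + c + 1) c
      rw [show a + c + 1 - c = a + 1 by omega] at hid
      have hq : ((a + c + 1).choose (c + 1) : ℚ) * (c + 1) =
          ((a + c + 1).choose c : ℚ) * (a + 1) := by exact_mod_cast hid
      rw [hF, show a + (c + 1) = a + c + 1 by omega]
      rw [Nat.cast_sub hle]
      have hX : ((a + c + 1).choose (c + 1) : ℚ) ≠ 0 := by
        exact_mod_cast (Nat.choose_pos (show c + 1 ≤ a + c + 1 by omega)).ne'
      have ha1 : ((a : ℚ) + 1) ≠ 0 := by positivity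
      field_simp
      push_cast
      ring_nf
      ring_nf at hq
      linarith [hq]
end

section
/- Counting version of the weak ballot theorem: the number of sequences of a ones and b minus-ones (a ≥ b ≥ 0) all of whose partial sums are nonnegative equals ((a + 1 - b)/(a + 1)) * C(a + b, b). -/
open Classical

def bcond (n a : ℕ) (f : Fin n → Bool) : Prop :=
  (Finset.univ.filter (fun j => f j = true)).card = a ∧
  ∀ k ∈ Finset.Icc 1 n,
    0 ≤ ∑ j ∈ Finset.univ.filter (fun j : Fin n => (j : ℕ) < k),
          (if f j then (1 : ℤ) else -1)

instance (n a : ℕ) : DecidablePred (bcond n a) := fun f => by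
  unfold bcond; infer_instance

def Mcard (n a : ℕ) : ℕ := (Finset.univ.filter (bcond n a)).card

lemma trues_snoc (n : ℕ) (g : Fin n → Bool) (c : Bool) :
    (Finset.univ.filter (fun j : Fin (n+1) => (Fin.snoc g c : Fin (n+1) → Bool) j = true)).card
      = (Finset.univ.filter (fun j : Fin n => g j = true)).card + (if c then 1 else 0) := by
  rw [Finset.card_filter, Finset.card_filter, Fin.sum_univ_castSucc]
  simp [Fin.snoc_castSucc, Fin.snoc_last]

lemma sum_snoc_lt (n k : ℕ) (hk : k ≤ n) (g : Fin n → Bool) (c : Bool) :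
    ∑ j ∈ Finset.univ.filter (fun j : Fin (n+1) => (j : ℕ) < k),
        (if (Fin.snoc g c : Fin (n+1) → Bool) j then (1 : ℤ) else -1)
      = ∑ j ∈ Finset.univ.filter (fun j : Fin n => (j : ℕ) < k),
          (if g j then (1 : ℤ) else -1) := by
  rw [Finset.sum_filter, Finset.sum_filter, Fin.sum_univ_castSucc]
  have h : ¬ ((Fin.last n : ℕ) < k) := by simp only [Fin.val_last]; omega
  simp only [h, if_false, add_zero, Fin.snoc_castSucc, Fin.coe_castSucc]

lemma sum_all (n : ℕ) (f : Fin n → Bool) :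
    ∑ j : Fin n, (if f j then (1 : ℤ) else -1)
      = 2 * (Finset.univ.filter (fun j => f j = true)).card - n := by
  induction n with
  | zero => simp
  | succ m ih =>
    have := trues_snoc m (fun j => f (Fin.castSucc j)) (f (Fin.last m))
    have hsnoc : (Fin.snoc (fun j => f (Fin.castSucc j)) (f (Fin.last m)) : Fin (m+1) → Bool) = f :=
      Fin.snoc_init_self f
    rw [hsnoc] at this
    rw [Fin.sum_univ_castSucc, ih, this]
    push_cast
    cases h : f (Fin.last m) <;> simp [h] <;> ring

lemma filter_lt_univ (n : ℕ) (k : ℕ) (hk : n ≤ k) :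
    Finset.univ.filter (fun j : Fin n => (j : ℕ) < k) = Finset.univ := by
  apply Finset.filter_true_of_mem
  intro j _; exact lt_of_lt_of_le j.isLt hk

lemma bcond_snoc (n a : ℕ) (h : n + 1 ≤ 2 * (a + 1)) (g : Fin n → Bool) (c : Bool) :
    bcond (n+1) (a+1) (Fin.snoc g c) ↔ bcond n (a + (if c then 0 else 1)) g := by
  constructor
  · rintro ⟨h1, h2⟩
    rw [trues_snoc] at h1
    constructor
    · cases c <;> simp at h1 ⊢ <;> omega
    · intro k hk
      simp only [Finset.mem_Icc] at hk
      have := h2 k (by simp only [Finset.mem_Icc]; omega)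
      rwa [sum_snoc_lt n k hk.2 g c] at this
  · rintro ⟨h1, h2⟩
    have hcard : (Finset.univ.filter (fun j : Fin (n+1) =>
        (Fin.snoc g c : Fin (n+1) → Bool) j = true)).card = a + 1 := by
      rw [trues_snoc, h1]; cases c <;> simp
    refine ⟨hcard, ?_⟩
    intro k hk
    simp only [Finset.mem_Icc] at hk
    rcases lt_or_eq_of_le hk.2 with hlt | heq
    · have hkn : k ≤ n := by omega
      rw [sum_snoc_lt n k hkn g c]
      exact h2 k (by simp only [Finset.mem_Icc]; omega)
    · subst heq
      rw [filter_lt_univ (n+1) (n+1) le_rfl, sum_all, hcard]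
      push_cast
      have : (n : ℤ) + 1 ≤ 2 * (a + 1) := by exact_mod_cast h
      linarith

lemma Mrec (n a : ℕ) (h : n + 1 ≤ 2 * (a + 1)) :
    Mcard (n+1) (a+1) = Mcard n a + Mcard n (a+1) := by
  classical
  unfold Mcard
  rw [← Finset.card_filter_add_card_filter_not
    (p := fun f : Fin (n+1) → Bool => f (Fin.last n) = true)]
  congr 1
  · rw [Finset.filter_filter]
    apply Finset.card_bij' (i := fun f _ => f ∘ Fin.castSucc)
      (j := fun g _ => Fin.snoc g true)
    · intro f hf
      simp only [Finset.mem_filter, Finset.mem_univ, true_and] at hf ⊢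
      have hself : (Fin.snoc (f ∘ Fin.castSucc) true : Fin (n+1) → Bool) = f := by
        have := Fin.snoc_init_self f
        rw [hf.2] at this; exact this
      have := (bcond_snoc n a h (f ∘ Fin.castSucc) true).mp (by rw [hself]; exact hf.1)
      simpa using this
    · intro g hg
      simp only [Finset.mem_filter, Finset.mem_univ, true_and] at hg ⊢
      refine ⟨(bcond_snoc n a h g true).mpr (by simpa using hg), ?_⟩
      simp [Fin.snoc_last]
    · intro f hf
      simp only [Finset.mem_filter, Finset.mem_univ, true_and] at hf
      have := Fin.snoc_init_self f
      rw [hf.2] at this; exact this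
    · intro g hg
      funext j; simp [Fin.snoc_castSucc]
  · rw [Finset.filter_filter]
    apply Finset.card_bij' (i := fun f _ => f ∘ Fin.castSucc)
      (j := fun g _ => Fin.snoc g false)
    · intro f hf
      simp only [Finset.mem_filter, Finset.mem_univ, true_and, Bool.not_eq_true] at hf ⊢
      have hself : (Fin.snoc (f ∘ Fin.castSucc) false : Fin (n+1) → Bool) = f := by
        have := Fin.snoc_init_self f
        rw [hf.2] at this; exact this
      have := (bcond_snoc n a h (f ∘ Fin.castSucc) false).mp (by rw [hself]; exact hf.1)
      simpa using this
    · intro g hg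
      simp only [Finset.mem_filter, Finset.mem_univ, true_and, Bool.not_eq_true] at hg ⊢
      refine ⟨(bcond_snoc n a h g false).mpr (by simpa using hg), ?_⟩
      simp [Fin.snoc_last]
    · intro f hf
      simp only [Finset.mem_filter, Finset.mem_univ, true_and, Bool.not_eq_true] at hf
      have := Fin.snoc_init_self f
      rw [hf.2] at this; exact this
    · intro g hg
      funext j; simp [Fin.snoc_castSucc]

lemma Mzero (n a : ℕ) (h : 2 * a < n) : Mcard n a = 0 := by
  unfold Mcard
  rw [Finset.card_eq_zero, Finset.filter_eq_empty_iff]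
  rintro f - ⟨h1, h2⟩
  have hn : 1 ≤ n := by omega
  have := h2 n (by simp only [Finset.mem_Icc]; omega)
  rw [filter_lt_univ n n le_rfl, sum_all, h1] at this
  have : (2 : ℤ) * a < n := by exact_mod_cast h
  omega

lemma Mdiag (n : ℕ) : Mcard n n = 1 := by
  unfold Mcard
  rw [Finset.card_eq_one]
  refine ⟨fun _ => true, ?_⟩
  ext f
  simp only [Finset.mem_filter, Finset.mem_univ, true_and, Finset.mem_singleton]
  constructor
  · rintro ⟨h1, -⟩
    have : Finset.univ.filter (fun j : Fin n => f j = true) = Finset.univ := by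
      apply Finset.eq_univ_of_card
      rw [h1]; simp
    funext j
    have := Finset.mem_filter.mp (this ▸ Finset.mem_univ j)
    simp [this.2]
  · rintro rfl
    refine ⟨by simp, ?_⟩
    intro k hk
    simp only [if_true]
    positivity

lemma key : ∀ N a b : ℕ, a + b = N → b ≤ a →
    ((a + b + 1 : ℚ)) * Mcard (a + b) a = ((a : ℚ) + 1 - b) * ((a + b + 1).choose b) := by
  intro N
  induction N using Nat.strong_induction_on with
  | _ N ih =>
    intro a b hN hba
    rcases Nat.eq_zero_or_pos b with rfl | hb
    · simp [Mdiag]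
    rcases Nat.exists_eq_add_of_le hb with ⟨b', rfl⟩
    have ha : 1 ≤ a := le_trans hb hba
    rcases Nat.exists_eq_add_of_le ha with ⟨a', rfl⟩
    set m := a' + b' + 1 with hm
    have habm : (1 + a') + (1 + b') = m + 1 := by omega
    have hrec : Mcard (m + 1) (1 + a') = Mcard m a' + Mcard m (1 + a') := by
      have h1 := Mrec m a' (by omega)
      have h2 : a' + 1 = 1 + a' := by omega
      rwa [h2] at h1
    -- IH for (a', 1+b')
    have e1 : ((a' + (1 + b') + 1 : ℚ)) * Mcard (a' + (1 + b')) a'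
        = ((a' : ℚ) + 1 - (1 + b')) * ((a' + (1 + b') + 1).choose (1 + b')) := by
      rcases le_or_gt (1 + b') a' with hba' | hlt
      · have h0 := ih (a' + (1 + b')) (by omega) a' (1 + b') rfl hba'
        push_cast at h0 ⊢
        linear_combination h0
      · have hz : Mcard (a' + (1 + b')) a' = 0 := Mzero _ _ (by omega)
        have hab2 : a' = b' := by omega
        rw [hz, hab2]
        push_cast
        ring
    -- IH for (1+a', b')
    have e2 : (((1 + a') + b' + 1 : ℚ)) * Mcard ((1 + a') + b') (1 + a')
        = (((1 + a' : ℕ) : ℚ) + 1 - b') * (((1 + a') + b' + 1).choose b') := by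
      have h0 := ih ((1 + a') + b') (by omega) (1 + a') b' rfl (by omega)
      push_cast at h0 ⊢
      linear_combination h0
    have hm1 : a' + (1 + b') = m := by omega
    have hm2 : (1 + a') + b' = m := by omega
    rw [hm1] at e1
    rw [hm2] at e2
    rw [habm, hrec]
    have pascal : (m + 1 + 1).choose (1 + b') = (m + 1).choose b' + (m + 1).choose (1 + b') := by
      have hb2 : 1 + b' = b' + 1 := by omega
      rw [hb2]
      exact Nat.choose_succ_succ (m + 1) b'
    have absorb : (m + 1).choose (1 + b') * (1 + b') = (m + 1).choose b' * ((1 + a') + 1) := by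
      have hb2 : 1 + b' = b' + 1 := by omega
      have hs : m + 1 - b' = (1 + a') + 1 := by omega
      rw [hb2, Nat.choose_succ_right_eq, hs]
    have pascalQ : (((m + 1 + 1).choose (1 + b') : ℚ))
        = ((m + 1).choose b' : ℚ) + ((m + 1).choose (1 + b') : ℚ) := by exact_mod_cast pascal
    have absorbQ : ((m + 1).choose (1 + b') : ℚ) * (1 + (b' : ℚ))
        = ((m + 1).choose b' : ℚ) * ((1 + (a' : ℚ)) + 1) := by exact_mod_cast absorb
    have hS : ((1 : ℚ) + a' + (1 + b')) ≠ 0 := by positivity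
    refine mul_left_cancel₀ hS ?_
    push_cast at e1 e2 ⊢
    linear_combination
      (((1:ℚ) + a' + (1 + b')) + 1) * e1 + (((1:ℚ) + a' + (1 + b')) + 1) * e2
      - ((1:ℚ) + a' + (1 + b')) * (1 + (a':ℚ) - (b':ℚ)) * pascalQ - 2 * absorbQ

/-- A sequence of `a` ones and `b` minus-ones is encoded as `f : Fin (a+b) → Bool`,
where `true` stands for `+1` and `false` for `-1`. -/

theorem stmt_16 (a b : ℕ) (hab : b ≤ a) :
    ((Finset.univ.filter (fun f : Fin (a + b) → Bool =>
        (Finset.univ.filter (fun j => f j = true)).card = a ∧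
        ∀ k ∈ Finset.Icc 1 (a + b),
          0 ≤ ∑ j ∈ Finset.univ.filter (fun j : Fin (a + b) => (j : ℕ) < k),
                (if f j then (1 : ℤ) else -1))).card : ℚ)
      = (((a : ℚ) + 1 - b) / ((a : ℚ) + 1)) * ((a + b).choose b : ℚ) := by
  have hM : (Finset.univ.filter (fun f : Fin (a + b) → Bool =>
        (Finset.univ.filter (fun j => f j = true)).card = a ∧
        ∀ k ∈ Finset.Icc 1 (a + b),
          0 ≤ ∑ j ∈ Finset.univ.filter (fun j : Fin (a + b) => (j : ℕ) < k),
                (if f j then (1 : ℤ) else -1))).card = Mcard (a + b) a := by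
    unfold Mcard bcond
    congr
  rw [hM]; clear hM
  have K := key (a + b) a b rfl hab
  have id1 : (a + b + 1) * (a + b).choose b = (a + b + 1).choose b * (a + 1) := by
    have h1 : (a + b).choose b = (a + b).choose a := by
      have h := Nat.choose_symm (show b ≤ a + b by omega)
      simpa using h.symm
    have h3 : (a + b + 1).choose (a + 1) = (a + b + 1).choose b := by
      have h := Nat.choose_symm (show b ≤ a + b + 1 by omega)
      have h4 : a + b + 1 - b = a + 1 := by omega
      rw [h4] at h
      exact h
    calc (a + b + 1) * (a + b).choose b = (a + b).succ * (a + b).choose a := by rw [h1]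
      _ = (a + b + 1).choose (a + 1) * (a + 1) := Nat.add_one_mul_choose_eq (a + b) a
      _ = (a + b + 1).choose b * (a + 1) := by rw [h3]
  have id1Q : ((a : ℚ) + b + 1) * ((a + b).choose b : ℚ) = ((a + b + 1).choose b : ℚ) * ((a : ℚ) + 1) := by
    exact_mod_cast id1
  have h1 : (a : ℚ) + b + 1 ≠ 0 := by positivity
  have h2 : (a : ℚ) + 1 ≠ 0 := by positivity
  rw [div_mul_eq_mul_div, eq_div_iff h2]
  refine mul_left_cancel₀ h1 ?_
  linear_combination ((a : ℚ) + 1) * K - ((a : ℚ) + 1 - b) * id1Q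
end
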